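/- Let E be a finite-dimensional complex inner product space and A a self-adjoint (Hermitian) linear endomorphism of E with distinct eigenvalues λ_1 < λ_2 < … < λ_r. For 1 ≤ j ≤ r let E_j denote the direct sum of the eigenspaces of A for the eigenvalues λ_1, …, λ_j. Let v_1, …, v_k be linearly independent vectors spanning a k-dimensional subspace π, and for t ∈ ℝ let G(t) be the k×k Gram matrix with entries G(t)_{ij} = ⟪exp(tA) v_i, exp(tA) v_j⟫ (so det G(t) is a positive real number). Then, as t → +∞, (1/(2t)) · log det G(t) converges to k·λ_r + Σ_{j=1}^{r-1} (λ_j − λ_{j+1}) · dim(π ∩ E_j). -/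

import Mathlib

/-!
Write `E_j` for the sum of the eigenspaces of `A` for `λ_0 < … < λ_j` and `π` for the span of
the `v_i`. Choose a basis `w` of `π` adapted to the flag `π ∩ E_0 ≤ π ∩ E_1 ≤ … ≤ π`: each `w_i`
lies in `E_{l_i}` but not in `E_{l_i - 1}`, and the `w_i` with `l_i ≤ j` form a basis of
`π ∩ E_j`. Splitting `w_i = u_i + (w_i - u_i)` with `u_i` in the `λ_{l_i}`-eigenspace and the
rest in `E_{l_i - 1}`, we get `e^{-t λ_{l_i}} exp(tA) w_i → u_i`, and the leading parts `u_i`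
are linearly independent. Hence `det G(t) = C e^{2tμ} (det Gram(u) + o(1))` with
`μ = ∑ λ_{l_i}` and `C > 0` from the change of basis `v ↔ w`, and an Abel summation turns `μ`
into the stated sum of dimensions.
-/

open Filter Set Submodule Module Matrix Topology
open scoped Finset

section Flag

variable {K E ι κ : Type*} [Field K] [AddCommGroup E] [Module K E] [LinearOrder ι]

theorem exists_linearIndepOn_span_inter_eq [Fintype ι] {Q : ι → Submodule K E}
    (hQ : Monotone Q) :
    ∃ s ⊆ ⋃ j, (Q j : Set E), LinearIndepOn K id s ∧ ∀ j, span K (s ∩ Q j) = Q j := by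
  classical
  suffices ∀ T : Finset ι, ∃ s ⊆ ⋃ j ∈ T, (Q j : Set E),
      LinearIndepOn K id s ∧ ∀ j ∈ T, span K (s ∩ Q j) = Q j by
    obtain ⟨s, hsQ, hs, hspan⟩ := this Finset.univ
    exact ⟨s, hsQ.trans (by simp), hs, fun j => hspan j (Finset.mem_univ j)⟩
  intro T
  induction T using Finset.induction_on_max with
  | empty => exact ⟨∅, by simp, linearIndepOn_empty K id, by simp⟩
  | insert a T hlt ih =>
    obtain ⟨s, hsQ, hs, hspan⟩ := ih
    have hsa : s ⊆ Q a := hsQ.trans <| iUnion₂_subset fun j hj => hQ (hlt j hj).le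
    obtain ⟨b, hba, hsb, hab, hb⟩ := exists_linearIndepOn_id_extension hs hsa
    refine ⟨b, fun x hx => mem_iUnion₂.2 ⟨a, Finset.mem_insert_self a T, hba hx⟩, hb, ?_⟩
    intro j hj
    refine le_antisymm (span_le.2 inter_subset_right) ?_
    rcases Finset.mem_insert.1 hj with rfl | hj
    · simpa [inter_eq_left.2 hba] using hab
    · exact (hspan j hj).ge.trans (span_mono (inter_subset_inter_left _ hsb))

theorem exists_forall_mem_iff_le [WellFoundedLT ι] {F : ι → Submodule K E}
    (hF : Monotone F) {x : E} {j₀ : ι} (hx : x ∈ F j₀) : ∃ l, ∀ j, x ∈ F j ↔ l ≤ j := by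
  obtain ⟨l, hl, hmin⟩ := wellFounded_lt.has_min {j | x ∈ F j} ⟨j₀, hx⟩
  exact ⟨l, fun j => ⟨fun hj => not_lt.1 (hmin j hj), fun hlj => hF hlj hl⟩⟩

structure IsFlagAdapted (V : ι → Submodule K E) (w : κ → E) (l : κ → ι) : Prop where
  mem_iff : ∀ i j, w i ∈ ⨆ p ≤ j, V p ↔ l i ≤ j
  inf_le_span : ∀ j, span K (range w) ⊓ (⨆ p ≤ j, V p) ≤ span K (w '' {i | l i ≤ j})

theorem exists_isFlagAdapted [Fintype ι] [OrderTop ι] {V : ι → Submodule K E} {v : κ → E}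
    (hv : LinearIndependent K v) (hvV : span K (range v) ≤ ⨆ j, V j) :
    ∃ (w : κ → E) (l : κ → ι), LinearIndependent K w ∧ span K (range w) = span K (range v) ∧
      IsFlagAdapted V w l := by
  set π := span K (range v)
  have hflag : Monotone fun j => ⨆ p ≤ j, V p := fun _ _ hij => biSup_mono fun _ h => h.trans hij
  have htop : ⨆ p ≤ (⊤ : ι), V p = ⨆ j, V j := by simp
  obtain ⟨s, hsQ, hs, hspan⟩ :=
    exists_linearIndepOn_span_inter_eq (Q := fun j => π ⊓ ⨆ p ≤ j, V p)
      fun _ _ hij => inf_le_inf_left π (hflag hij)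
  have hsπ : span K s = π := by
    refine le_antisymm (span_le.2 fun x hx => ?_) ?_
    · obtain ⟨j, hj⟩ := mem_iUnion.1 (hsQ hx)
      exact hj.1
    · have := hspan ⊤
      rw [htop, inf_eq_left.2 hvV] at this
      exact this ▸ span_mono inter_subset_left
  let e : s ≃ κ :=
    ((Basis.span hs).map (LinearEquiv.ofEq _ _ (by simpa using hsπ))).indexEquiv (Basis.span hv)
  set w : κ → E := fun i => e.symm i
  have hrange : range w = s := (e.symm.surjective.range_comp _).trans Subtype.range_coe
  have hwπ : ∀ i, w i ∈ ⨆ p ≤ (⊤ : ι), V p := fun i =>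
    htop ▸ hvV (hsπ ▸ subset_span (e.symm i).2)
  choose l hl using fun i => exists_forall_mem_iff_le hflag (hwπ i)
  refine ⟨w, l, hs.comp e.symm e.symm.injective, by rw [hrange, hsπ], hl, fun j => ?_⟩
  rw [hrange, hsπ, ← hspan j]
  refine span_mono fun x ⟨hxs, hxQ⟩ => ⟨e ⟨x, hxs⟩, (hl _ j).1 ?_, by simp [w]⟩
  simpa [w] using hxQ.2

namespace IsFlagAdapted

variable {V : ι → Submodule K E} {w : κ → E} {l : κ → ι}

theorem span_image_eq (h : IsFlagAdapted V w l) (j : ι) :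
    span K (w '' {i | l i ≤ j}) = span K (range w) ⊓ ⨆ p ≤ j, V p := by
  refine le_antisymm (span_le.2 ?_) (h.inf_le_span j)
  rintro _ ⟨i, hi, rfl⟩
  exact ⟨subset_span (mem_range_self i), (h.mem_iff i j).2 hi⟩

theorem finrank_inf_eq_card [Fintype κ] (h : IsFlagAdapted V w l) (hw : LinearIndependent K w)
    (j : ι) : finrank K ↥(span K (range w) ⊓ ⨆ p ≤ j, V p) = #{i | l i ≤ j} := by
  rw [← h.span_image_eq, image_eq_range]
  exact (finrank_span_eq_card (hw.comp _ Subtype.val_injective)).trans (Fintype.card_subtype _)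

theorem inf_biSup_lt_le_span [PredOrder ι] (h : IsFlagAdapted V w l) (j : ι) :
    span K (range w) ⊓ (⨆ p < j, V p) ≤ span K (w '' {i | l i < j}) := by
  by_cases hj : IsMin j
  · simp [hj.not_lt]
  calc span K (range w) ⊓ (⨆ p < j, V p)
      ≤ span K (range w) ⊓ ⨆ p ≤ Order.pred j, V p :=
        inf_le_inf_left _ (biSup_mono fun _ => Order.le_pred_of_lt)
    _ ≤ span K (w '' {i | l i ≤ Order.pred j}) := h.inf_le_span _
    _ = span K (w '' {i | l i < j}) := by simp_rw [Order.le_pred_iff_of_not_isMin hj]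

theorem linearIndependent_leading [PredOrder ι] (h : IsFlagAdapted V w l) (hV : iSupIndep V)
    (hw : LinearIndependent K w) {u : κ → E} (hu : ∀ i, u i ∈ V (l i))
    (hwu : ∀ i, w i - u i ∈ ⨆ p < l i, V p) : LinearIndependent K u := by
  classical
  rw [linearIndependent_iff']
  intro S g hg i₀ hi₀
  have hfib : ∀ j ∈ S.image l, ∑ i ∈ S with l i = j, g i • u i = 0 := by
    refine (iSupIndep_iff_finsetSum_eq_zero_imp_eq_zero V).1 hV _ _ (fun j _ => ?_) ?_
    · exact sum_mem fun i hi => smul_mem _ _ ((Finset.mem_filter.1 hi).2 ▸ hu i)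
    · rwa [Finset.sum_fiberwise_of_maps_to fun i hi => Finset.mem_image_of_mem l hi]
  set j := l i₀
  set x := ∑ i ∈ S with l i = j, g i • w i
  have hx_lt : x ∈ ⨆ p < j, V p := by
    have : x = ∑ i ∈ S with l i = j, g i • (w i - u i) := by
      simp only [smul_sub, Finset.sum_sub_distrib, x, hfib j (Finset.mem_image_of_mem l hi₀),
        sub_zero]
    rw [this]
    exact sum_mem fun i hi => smul_mem _ _ ((Finset.mem_filter.1 hi).2 ▸ hwu i)
  have hx_range : x ∈ span K (range w) :=
    sum_mem fun i _ => smul_mem _ _ (subset_span (mem_range_self i))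
  have hx_eq : x ∈ span K (w '' {i | l i = j}) :=
    sum_mem fun i hi => smul_mem _ _ (subset_span ⟨i, (Finset.mem_filter.1 hi).2, rfl⟩)
  have hdisj : Disjoint {i | l i = j} {i | l i < j} :=
    disjoint_left.2 fun i (hi : l i = j) (hi' : l i < j) => hi'.ne hi
  have hx0 : x = 0 := disjoint_def.1 (hw.disjoint_span_image hdisj) x hx_eq
    (h.inf_biSup_lt_le_span j ⟨hx_range, hx_lt⟩)
  exact linearIndependent_iff'.1 hw _ g hx0 i₀ (Finset.mem_filter.2 ⟨hi₀, rfl⟩)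

end IsFlagAdapted

end Flag

theorem sum_ite_le_castSucc_sub_succ {M : Type*} [AddCommGroup M] {r : ℕ}
    (f : Fin (r + 1) → M) (a : Fin (r + 1)) :
    ∑ j : Fin r, (if a ≤ j.castSucc then f j.castSucc - f j.succ else 0) =
      f a - f (Fin.last r) := by
  induction r with
  | zero => simp [Fin.fin_one_eq_zero a]
  | succ r ih =>
    rw [Fin.sum_univ_castSucc]
    induction a using Fin.lastCases with
    | last => simp [(Fin.castSucc_lt_last _).not_ge]
    | cast a =>
      simp only [Fin.castSucc_le_castSucc_iff, Fin.succ_castSucc, Fin.le_last, if_true,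
        Fin.succ_last]
      rw [ih (fun p => f p.castSucc) a]
      abel

theorem sum_comp_eq_card_mul_last_add {R κ : Type*} [CommRing R] [Fintype κ] {r : ℕ}
    (f : Fin (r + 1) → R) (l : κ → Fin (r + 1)) :
    ∑ i, f (l i) = Fintype.card κ * f (Fin.last r) +
      ∑ j : Fin r, (f j.castSucc - f j.succ) * #{i | l i ≤ j.castSucc} := by
  have (i : κ) : f (l i) = f (Fin.last r) +
      ∑ j : Fin r, (if l i ≤ j.castSucc then f j.castSucc - f j.succ else 0) := by
    rw [sum_ite_le_castSucc_sub_succ]; abel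
  simp_rw [this, Finset.sum_add_distrib, Finset.sum_const, Finset.card_univ, nsmul_eq_mul]
  rw [Finset.sum_comm]
  congr 1
  refine Finset.sum_congr rfl fun j _ => ?_
  rw [← Finset.sum_filter, Finset.sum_const, nsmul_eq_mul, mul_comm]

section Exponential

theorem exp_apply_of_apply_eq_smul {𝕜 E : Type*} [RCLike 𝕜] [NormedAddCommGroup E]
    [NormedSpace 𝕜 E] [CompleteSpace E] {T : E →L[𝕜] E} {x : E} {a : 𝕜} (h : T x = a • x) :
    NormedSpace.exp T x = NormedSpace.exp a • x := by
  have hpow (n : ℕ) : (T ^ n) x = a ^ n • x := by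
    induction n with
    | zero => simp
    | succ n ih =>
      calc (T ^ (n + 1)) x = T ((T ^ n) x) := by rw [pow_succ']; rfl
        _ = a ^ (n + 1) • x := by rw [ih, map_smul, h, smul_smul, pow_succ]
  refine ((NormedSpace.exp_series_hasSum_exp' (𝕂 := 𝕜) T).mapL
    (ContinuousLinearMap.apply 𝕜 E x)).unique ?_
  simpa [hpow, smul_smul] using (NormedSpace.exp_series_hasSum_exp' (𝕂 := 𝕜) a).smul_const x

variable {E : Type*} [NormedAddCommGroup E] [NormedSpace ℂ E] [CompleteSpace E] {A : E →L[ℂ] E}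

theorem exp_smul_apply_of_mem_eigenspace {c : ℝ} {x : E}
    (hx : x ∈ Module.End.eigenspace (A : E →ₗ[ℂ] E) (c : ℂ)) (t : ℝ) :
    NormedSpace.exp (t • A) x = (Real.exp (t * c) : ℂ) • x := by
  have hAx : A x = (c : ℂ) • x := Module.End.mem_eigenspace_iff.1 hx
  have h : (t • A) x = ((t * c : ℝ) : ℂ) • x := by
    simp [hAx, mul_smul, Complex.coe_smul]
  rw [exp_apply_of_apply_eq_smul h, ← Complex.exp_eq_exp_ℂ, ← Complex.ofReal_exp]

variable {ι : Type*} [PartialOrder ι] {lam : ι → ℝ}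

theorem tendsto_exp_smul_apply_of_mem_biSup_lt (hlam : StrictMono lam) {j : ι} {x : E}
    (hx : x ∈ ⨆ p < j, Module.End.eigenspace (A : E →ₗ[ℂ] E) (lam p : ℂ)) :
    Tendsto (fun t : ℝ => (Real.exp (-(t * lam j)) : ℂ) • NormedSpace.exp (t • A) x) atTop
      (𝓝 0) := by
  refine Submodule.iSup_induction _ (motive := fun x => Tendsto (fun t : ℝ =>
    (Real.exp (-(t * lam j)) : ℂ) • NormedSpace.exp (t • A) x) atTop (𝓝 0)) hx ?_ ?_ ?_
  · intro p y hy
    by_cases hp : p < j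
    · rw [iSup_pos hp] at hy
      have hdecay : Tendsto (fun t : ℝ => Real.exp (t * (lam p - lam j))) atTop (𝓝 0) :=
        Real.tendsto_exp_atBot.comp <|
          tendsto_id.atTop_mul_const_of_neg (sub_neg.2 (hlam hp))
      have hy_exp (t : ℝ) : (Real.exp (-(t * lam j)) : ℂ) • NormedSpace.exp (t • A) y =
          (Real.exp (t * (lam p - lam j)) : ℂ) • y := by
        rw [exp_smul_apply_of_mem_eigenspace hy, smul_smul, ← Complex.ofReal_mul, ← Real.exp_add]
        ring_nf
      simp only [hy_exp]
      simpa using ((Complex.continuous_ofReal.tendsto 0).comp hdecay).smul_const y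
    · rw [iSup_neg hp, Submodule.mem_bot] at hy
      simp [hy]
  · simp
  · intro y z hy hz
    simpa [smul_add] using hy.add hz

theorem exists_tendsto_exp_smul_apply (hlam : StrictMono lam) {j : ι} {x : E}
    (hx : x ∈ ⨆ p ≤ j, Module.End.eigenspace (A : E →ₗ[ℂ] E) (lam p : ℂ)) :
    ∃ u ∈ Module.End.eigenspace (A : E →ₗ[ℂ] E) (lam j : ℂ),
      x - u ∈ ⨆ p < j, Module.End.eigenspace (A : E →ₗ[ℂ] E) (lam p : ℂ) ∧
      Tendsto (fun t : ℝ => (Real.exp (-(t * lam j)) : ℂ) • NormedSpace.exp (t • A) x) atTop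
        (𝓝 u) := by
  rw [biSup_le_eq_sup, Submodule.mem_sup] at hx
  obtain ⟨a, ha, u, hu, rfl⟩ := hx
  refine ⟨u, hu, by simpa using ha, ?_⟩
  have hu_fixed (t : ℝ) : (Real.exp (-(t * lam j)) : ℂ) • NormedSpace.exp (t • A) u = u := by
    rw [exp_smul_apply_of_mem_eigenspace hu, smul_smul, ← Complex.ofReal_mul, ← Real.exp_add,
      neg_add_cancel, Real.exp_zero, Complex.ofReal_one, one_smul]
  simp only [map_add, smul_add, hu_fixed]
  simpa using (tendsto_exp_smul_apply_of_mem_biSup_lt hlam ha).add_const u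

end Exponential

section Gram

variable {𝕜 E κ : Type*} [RCLike 𝕜] [NormedAddCommGroup E] [InnerProductSpace 𝕜 E]

theorem gram_sum_smul {ι : Type*} [Fintype ι] (N : Matrix ι κ 𝕜) (x : ι → E) :
    gram 𝕜 (fun j => ∑ i, N i j • x i) = Nᴴ * gram 𝕜 x * N := by
  ext j j'
  simp only [gram_apply, sum_inner, inner_sum, inner_smul_left, inner_smul_right, mul_apply,
    conjTranspose_apply, Finset.sum_mul, Finset.mul_sum, RCLike.star_def]
  refine Finset.sum_congr rfl fun i _ => Finset.sum_congr rfl fun i' _ => ?_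
  ring

variable [Fintype κ] [DecidableEq κ]

theorem gram_smul (a : κ → 𝕜) (z : κ → E) :
    gram 𝕜 (fun i => a i • z i) = diagonal (star a) * gram 𝕜 z * diagonal a := by
  ext i j
  simp [inner_smul_left, inner_smul_right, diagonal_mul, mul_diagonal, mul_comm]

theorem exists_det_gram_comp_eq {v w : κ → E} (hv : LinearIndependent 𝕜 v)
    (hvw : ∀ j, v j ∈ span 𝕜 (range w)) :
    ∃ c : ℝ, 0 < c ∧ ∀ f : E →ₗ[𝕜] E, (gram 𝕜 (f ∘ v)).det = c * (gram 𝕜 (f ∘ w)).det := by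
  choose N hN using fun j => (mem_span_range_iff_exists_fun 𝕜).1 (hvw j)
  have key (f : E →ₗ[𝕜] E) :
      (gram 𝕜 (f ∘ v)).det = (‖(of fun i j => N j i).det‖ ^ 2 : ℝ) * (gram 𝕜 (f ∘ w)).det := by
    have hfv : f ∘ v = fun j => ∑ i, (of fun i j => N j i) i j • (f ∘ w) i := by
      ext j
      simp [← hN j, map_sum, map_smul]
    rw [hfv, gram_sum_smul, det_mul, det_mul, det_conjTranspose, RCLike.star_def, mul_comm,
      ← mul_assoc, RCLike.mul_conj]
    push_cast
    ring
  refine ⟨_, lt_of_le_of_ne (sq_nonneg _) fun h0 => ?_, key⟩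
  have hvw := key LinearMap.id
  rw [← h0] at hvw
  exact det_gram_ne_zero_iff_linearIndependent.2 hv (by simpa using hvw)

end Gram

theorem tendsto_log_mul_exp_mul_div {β μ c : ℝ} {h : ℝ → ℝ} (hβ : 0 < β) (hc : 0 < c)
    (hh : Tendsto h atTop (𝓝 c)) :
    Tendsto (fun t => 1 / (2 * t) * Real.log (β * (Real.exp (2 * t * μ) * h t))) atTop (𝓝 μ) := by
  have hlog : Tendsto (fun t => Real.log β + Real.log (h t)) atTop
      (𝓝 (Real.log β + Real.log c)) :=
    tendsto_const_nhds.add ((Real.continuousAt_log hc.ne').tendsto.comp hh)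
  have hlim := tendsto_const_nhds (x := μ).add
    (hlog.div_atTop (tendsto_id.const_mul_atTop two_pos))
  simp only [add_zero, id] at hlim
  refine hlim.congr' ?_
  filter_upwards [hh.eventually (eventually_gt_nhds hc), eventually_gt_atTop 0] with t hht ht
  rw [Real.log_mul hβ.ne' (by positivity), Real.log_mul (by positivity) hht.ne', Real.log_exp]
  field_simp
  ring

section GramAsymptotics

variable {E κ : Type*} [NormedAddCommGroup E] [InnerProductSpace ℂ E] [Fintype κ] [DecidableEq κ]

theorem det_gram_ofReal_smul (a : κ → ℝ) (z : κ → E) :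
    (gram ℂ (fun i => (a i : ℂ) • z i)).det = ((∏ i, a i) ^ 2 : ℝ) * (gram ℂ z).det := by
  rw [gram_smul, det_mul, det_mul, det_diagonal, det_diagonal]
  simp only [Pi.star_apply, Complex.star_def, Complex.conj_ofReal]
  push_cast
  ring

theorem tendsto_log_det_gram {f : ℝ → κ → E} {μ : κ → ℝ} {u : κ → E}
    (hu : LinearIndependent ℂ u)
    (hf : ∀ i, Tendsto (fun t => (Real.exp (-(t * μ i)) : ℂ) • f t i) atTop (𝓝 (u i)))
    {c : ℝ} (hc : 0 < c) :
    Tendsto (fun t => 1 / (2 * t) * Real.log (c * (gram ℂ (f t)).det.re)) atTop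
      (𝓝 (∑ i, μ i)) := by
  set z : ℝ → κ → E := fun t i => (Real.exp (-(t * μ i)) : ℂ) • f t i
  have hfz (t : ℝ) : f t = fun i => (Real.exp (t * μ i) : ℂ) • z t i := by
    ext i
    rw [smul_smul, ← Complex.ofReal_mul, ← Real.exp_add, add_neg_cancel, Real.exp_zero,
      Complex.ofReal_one, one_smul]
  have hdet (t : ℝ) :
      (gram ℂ (f t)).det.re = Real.exp (2 * t * ∑ i, μ i) * (gram ℂ (z t)).det.re := by
    rw [hfz t, det_gram_ofReal_smul, Complex.re_ofReal_mul, ← Real.exp_sum, ← Finset.mul_sum,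
      ← Real.exp_nat_mul]
    push_cast
    ring_nf
  have hz : Tendsto (fun t => (gram ℂ (z t)).det.re) atTop (𝓝 (gram ℂ u).det.re) := by
    have : Tendsto (fun t => gram ℂ (z t)) atTop (𝓝 (gram ℂ u)) :=
      tendsto_pi_nhds.2 fun i => tendsto_pi_nhds.2 fun j => (hf i).inner (hf j)
    exact (Complex.continuous_re.tendsto _).comp ((continuous_id.matrix_det.tendsto _).comp this)
  have hpos : 0 < (gram ℂ u).det.re :=
    (RCLike.pos_iff.1 (posDef_gram_of_linearIndependent hu).det_pos).1
  simpa only [hdet] using tendsto_log_mul_exp_mul_div hc hpos hz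

end GramAsymptotics

theorem tendsto_log_det_gram_exp_smul_general
    {E : Type*} [NormedAddCommGroup E] [InnerProductSpace ℂ E] [FiniteDimensional ℂ E]
    (A : E →L[ℂ] E)
    (r : ℕ) (lam : Fin (r + 1) → ℝ) (hlam : StrictMono lam)
    (hsup : (⨆ j, Module.End.eigenspace (A : E →ₗ[ℂ] E) (lam j : ℂ)) = ⊤)
    (k : ℕ) (v : Fin k → E) (hv : LinearIndependent ℂ v) :
    Tendsto (fun t : ℝ =>
        (1 / (2 * t)) * Real.log
          ((Matrix.of fun i j : Fin k =>
              (inner ℂ (NormedSpace.exp (t • A) (v i))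
                (NormedSpace.exp (t • A) (v j)) : ℂ)).det.re))
      atTop
      (nhds ((k : ℝ) * lam (Fin.last r) +
        ∑ j : Fin r, (lam j.castSucc - lam j.succ) *
          (Module.finrank ℂ
            ↥(Submodule.span ℂ (Set.range v) ⊓
              ⨆ i, ⨆ _ : i ≤ j.castSucc,
                Module.End.eigenspace (A : E →ₗ[ℂ] E) (lam i : ℂ)) : ℝ))) := by
  set V : Fin (r + 1) → Submodule ℂ E := fun j => Module.End.eigenspace (A : E →ₗ[ℂ] E) (lam j)
  have hV : iSupIndep V :=
    (Module.End.eigenspaces_iSupIndep _).comp (Complex.ofReal_injective.comp hlam.injective)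
  obtain ⟨w, l, hw, hspan, hadapt⟩ := exists_isFlagAdapted (V := V) hv (hsup ▸ le_top)
  choose u hu hwu hlim using fun i =>
    exists_tendsto_exp_smul_apply (A := A) hlam ((hadapt.mem_iff i (l i)).2 le_rfl)
  obtain ⟨c, hc, hdet⟩ :=
    exists_det_gram_comp_eq (w := w) hv fun j => hspan ▸ subset_span (mem_range_self j)
  have hμ : (k : ℝ) * lam (Fin.last r) + ∑ j : Fin r, (lam j.castSucc - lam j.succ) *
      (finrank ℂ ↥(span ℂ (range v) ⊓ ⨆ i ≤ j.castSucc, V i) : ℝ) = ∑ i, lam (l i) := by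
    rw [sum_comp_eq_card_mul_last_add lam l, Fintype.card_fin, ← hspan]
    simp_rw [hadapt.finrank_inf_eq_card hw]
  rw [hμ]
  refine (tendsto_log_det_gram (hadapt.linearIndependent_leading hV hw hu hwu) hlim hc).congr
    fun t => ?_
  have h := congrArg Complex.re (hdet ((NormedSpace.exp (t • A) : E →L[ℂ] E) : E →ₗ[ℂ] E))
  rw [RCLike.ofReal_eq_complex_ofReal, Complex.re_ofReal_mul] at h
  exact congrArg (fun x => 1 / (2 * t) * Real.log x) h.symm

/-- Let `A` be a self-adjoint endomorphism of a finite-dimensional complex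
inner product space whose distinct eigenvalues are `lam 0 < lam 1 < … < lam r` (indexed by
`Fin (r+1)`), and for `j` let `E_j` be the sum of the eigenspaces for the eigenvalues
`lam 0, …, lam j`.  Let `v 0, …, v (k-1)` be linearly independent, spanning `π`, and let
`G t` be the Gram matrix `G t i j = ⟪exp(tA) (v i), exp(tA) (v j)⟫`.  Then, as `t → +∞`,
`(1/(2t)) log det (G t)` converges to
`k·(lam r) + ∑_{j<r} (lam j − lam (j+1)) · dim (π ⊓ E_j)`. -/
theorem tendsto_log_det_gram_exp_smul
    {E : Type*} [NormedAddCommGroup E] [InnerProductSpace ℂ E] [FiniteDimensional ℂ E]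
    (A : E →L[ℂ] E) (hA : IsSelfAdjoint A)
    (r : ℕ) (lam : Fin (r + 1) → ℝ) (hlam : StrictMono lam)
    (heig : ∀ j, Module.End.eigenspace (A : E →ₗ[ℂ] E) (lam j : ℂ) ≠ ⊥)
    (hsup : (⨆ j, Module.End.eigenspace (A : E →ₗ[ℂ] E) (lam j : ℂ)) = ⊤)
    (k : ℕ) (v : Fin k → E) (hv : LinearIndependent ℂ v) :
    Tendsto (fun t : ℝ =>
        (1 / (2 * t)) * Real.log
          ((Matrix.of fun i j : Fin k =>
              (inner ℂ (NormedSpace.exp (t • A) (v i))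
                (NormedSpace.exp (t • A) (v j)) : ℂ)).det.re))
      atTop
      (nhds ((k : ℝ) * lam (Fin.last r) +
        ∑ j : Fin r, (lam j.castSucc - lam j.succ) *
          (Module.finrank ℂ
            ↥(Submodule.span ℂ (Set.range v) ⊓
              ⨆ i, ⨆ _ : i ≤ j.castSucc,
                Module.End.eigenspace (A : E →ₗ[ℂ] E) (lam i : ℂ)) : ℝ))) :=
  tendsto_log_det_gram_exp_smul_general A r lam hlam hsup k v hv
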